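/- For every n ≥ 3, the odd independence number of the cycle on n vertices is ⌈(n−2)/3⌉: αod(C_n) = ⌈(n−2)/3⌉. -/

import Mathlib

open Finset

section OddIndepDefs

variable {V : Type*} [Fintype V] [DecidableEq V]

/-- `S` is an odd independent set in `G`: `S` is independent and every vertex outside `S`
has either no neighbor in `S` or an odd number of neighbors in `S`. -/
def IsOddIndepSet (G : SimpleGraph V) [DecidableRel G.Adj] (S : Finset V) : Prop :=
  (∀ u ∈ S, ∀ v ∈ S, ¬ G.Adj u v) ∧
  ∀ v ∉ S, (S.filter fun u => G.Adj v u) = ∅ ∨ Odd (S.filter fun u => G.Adj v u).card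

/-- The odd independence number: the largest size of an odd independent set. -/
noncomputable def oddIndepNum (G : SimpleGraph V) [DecidableRel G.Adj] : ℕ :=
  sSup {k | ∃ S : Finset V, IsOddIndepSet G S ∧ S.card = k}

/-- The independence number: the largest size of an independent set. -/
noncomputable def indepNum (G : SimpleGraph V) : ℕ :=
  sSup {k | ∃ S : Finset V, (∀ u ∈ S, ∀ v ∈ S, ¬ G.Adj u v) ∧ S.card = k}

/-- A strong odd coloring with `n` colors: a proper coloring such that for every vertex `v`,
every color appearing in the open neighborhood of `v` appears there an odd number of times. -/
def IsStrongOddColoring (G : SimpleGraph V) [DecidableRel G.Adj] {n : ℕ} (c : V → Fin n) : Prop :=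
  (∀ u v, G.Adj u v → c u ≠ c v) ∧
  ∀ v : V, ∀ k : Fin n,
    (univ.filter fun u => G.Adj v u ∧ c u = k) = ∅ ∨
    Odd (univ.filter fun u => G.Adj v u ∧ c u = k).card

/-- The strong odd chromatic number: minimum number of colors of a strong odd coloring. -/
noncomputable def strongOddChromNum (G : SimpleGraph V) [DecidableRel G.Adj] : ℕ :=
  sInf {n | ∃ c : V → Fin n, IsStrongOddColoring G c}

/-- The chromatic number, as a natural number. -/
noncomputable def chromNum (G : SimpleGraph V) : ℕ :=
  sInf {n | ∃ c : V → Fin n, ∀ u v, G.Adj u v → c u ≠ c v}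

/-- The square of a graph: two distinct vertices are adjacent iff they are at distance at most 2,
i.e. adjacent or having a common neighbor. -/
def graphSquare (G : SimpleGraph V) : SimpleGraph V where
  Adj u v := u ≠ v ∧ (G.Adj u v ∨ ∃ w, G.Adj u w ∧ G.Adj w v)
  symm := by
    constructor
    intro u v h
    refine ⟨h.1.symm, ?_⟩
    rcases h.2 with h' | ⟨w, h1, h2⟩
    · exact Or.inl h'.symm
    · exact Or.inr ⟨w, h2.symm, h1.symm⟩
  loopless := ⟨fun v h => h.1 rfl⟩

instance (G : SimpleGraph V) [DecidableRel G.Adj] : DecidableRel (graphSquare G).Adj :=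
  fun u v => inferInstanceAs (Decidable (u ≠ v ∧ (G.Adj u v ∨ ∃ w, G.Adj u w ∧ G.Adj w v)))

end OddIndepDefs


/-!
In a graph of maximum degree two a set is odd independent exactly when no vertex outside it
sees two of its members, i.e. when it is independent in the square of the graph. In `C_n` the
closed neighbourhoods of such a set are disjoint triples, so it has at most `⌊n/3⌋` elements,
and the vertices `0, 3, …, 3(⌊n/3⌋ - 1)` attain this bound. Finally `⌊n/3⌋ = ⌈(n-2)/3⌉`.
-/

section OddIndepSet

open SimpleGraph

variable {V : Type*} {G : SimpleGraph V} [DecidableRel G.Adj] {S : Finset V}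

theorem isOddIndepSet_of_isIndepSet_graphSquare (hS : (graphSquare G).IsIndepSet S) :
    IsOddIndepSet G S := by
  refine ⟨fun u hu v hv huv => hS hu hv (G.ne_of_adj huv) ⟨G.ne_of_adj huv, Or.inl huv⟩, ?_⟩
  intro v _
  have hle : (S.filter fun u => G.Adj v u).card ≤ 1 := by
    refine card_le_one.2 fun a ha b hb => ?_
    rw [mem_filter] at ha hb
    by_contra hab
    exact hS ha.1 hb.1 hab ⟨hab, Or.inr ⟨v, ha.2.symm, hb.2⟩⟩
  rcases Nat.le_one_iff_eq_zero_or_eq_one.1 hle with h | h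
  · exact Or.inl (card_eq_zero.1 h)
  · exact Or.inr (h ▸ odd_one)

theorem IsOddIndepSet.isIndepSet_graphSquare [Fintype V] [DecidableEq V]
    (hdeg : ∀ v, G.degree v ≤ 2) (hS : IsOddIndepSet G S) : (graphSquare G).IsIndepSet S := by
  rintro u (hu : u ∈ S) w (hw : w ∈ S) - ⟨huw, hadj | ⟨x, hux, hxw⟩⟩
  · exact hS.1 u hu w hw hadj
  have hx : x ∉ S := fun hx => hS.1 u hu x hx hux
  have hpair : ({u, w} : Finset V) ⊆ S.filter fun y => G.Adj x y := by
    simp [insert_subset_iff, hu, hw, hux.symm, hxw]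
  have htwo : (S.filter fun y => G.Adj x y).card = 2 := by
    refine le_antisymm ?_ (card_pair huw ▸ card_le_card hpair)
    calc (S.filter fun y => G.Adj x y).card ≤ (G.neighborFinset x).card :=
          card_le_card fun y hy => (G.mem_neighborFinset x y).2 (mem_filter.1 hy).2
      _ = G.degree x := G.card_neighborFinset_eq_degree x
      _ ≤ 2 := hdeg x
  rcases hS.2 x hx with h | h
  · simp [h] at htwo
  · rw [htwo] at h
    exact Nat.not_odd_iff_even.2 even_two h

theorem SimpleGraph.IsIndepSet.card_mul_le_of_graphSquare [Fintype V] [DecidableEq V] {d : ℕ}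
    (hG : G.IsRegularOfDegree d) (hS : (graphSquare G).IsIndepSet S) :
    S.card * (d + 1) ≤ Fintype.card V := by
  let N : V → Finset V := fun v => insert v (G.neighborFinset v)
  have hN : ∀ v, (N v).card = d + 1 := fun v => by
    rw [card_insert_of_notMem (by simp), card_neighborFinset_eq_degree, hG.degree_eq]
  have hdisj : (S : Set V).PairwiseDisjoint N := by
    intro u hu w hw huw
    rw [Function.onFun, Finset.disjoint_left]
    intro x hxu hxw
    refine hS hu hw huw ⟨huw, ?_⟩
    simp only [N, mem_insert, mem_neighborFinset] at hxu hxw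
    rcases hxu with rfl | hux <;> rcases hxw with rfl | hwx
    · exact absurd rfl huw
    · exact Or.inl hwx.symm
    · exact Or.inl hux
    · exact Or.inr ⟨x, hux, hwx.symm⟩
  calc S.card * (d + 1) = (S.biUnion N).card := by
        rw [card_biUnion hdisj, sum_congr rfl fun v _ => hN v, sum_const, smul_eq_mul]
    _ ≤ Fintype.card V := card_le_univ _

lemma IsOddIndepSet.card_le_oddIndepNum [Fintype V] (hS : IsOddIndepSet G S) :
    S.card ≤ oddIndepNum G :=
  le_csSup ⟨Fintype.card V, by rintro _ ⟨T, -, rfl⟩; exact card_le_univ T⟩ ⟨S, hS, rfl⟩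

lemma oddIndepNum_le {k : ℕ} (h : ∀ S, IsOddIndepSet G S → S.card ≤ k) : oddIndepNum G ≤ k :=
  csSup_le ⟨0, ∅, ⟨by simp, by simp⟩, rfl⟩ (by rintro _ ⟨S, hS, rfl⟩; exact h S hS)

end OddIndepSet

namespace SimpleGraph

variable {n : ℕ}

lemma cycleGraph_isRegularOfDegree_two : (cycleGraph (n + 3)).IsRegularOfDegree 2 :=
  fun _ => cycleGraph_degree_three_le

lemma val_sub_le_two_of_graphSquare_cycleGraph_adj {u v : Fin (n + 3)}
    (h : (graphSquare (cycleGraph (n + 3))).Adj u v) : (u - v).val ≤ 2 ∨ (v - u).val ≤ 2 := by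
  obtain ⟨huv, hadj | ⟨w, huw, hwv⟩⟩ := h
  · rcases cycleGraph_adj'.1 hadj with h | h <;> omega
  rw [cycleGraph_adj] at huw hwv
  rcases huw with huw | hwu <;> rcases hwv with hwv | hvw
  · left
    rw [← sub_add_sub_cancel u w v, huw, hwv]
    exact Fin.val_two.le
  · exact absurd (sub_left_inj.1 (huw.trans hvw.symm)) huv
  · exact absurd (sub_right_inj.1 (hwu.trans hwv.symm)) huv
  · right
    rw [← sub_add_sub_cancel v w u, hvw, hwu]
    exact Fin.val_two.le

lemma exists_isIndepSet_graphSquare_cycleGraph :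
    ∃ S : Finset (Fin (n + 3)),
      (graphSquare (cycleGraph (n + 3))).IsIndepSet S ∧ S.card = (n + 3) / 3 := by
  let f : Fin ((n + 3) / 3) ↪ Fin (n + 3) :=
    ⟨fun i => ⟨3 * i, by omega⟩, fun i j h => Fin.ext (by simpa using h)⟩
  have hf : ∀ i, (f i).val = 3 * i.val := fun _ => rfl
  have hsub : ∀ i j, i ≠ j → 3 ≤ (f i - f j).val := by
    intro i j hij
    have := hf i; have := hf j; have := j.isLt; have := Fin.val_ne_of_ne hij
    rcases le_or_gt (f j) (f i) with h | h
    · rw [Fin.coe_sub_iff_le.2 h]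
      have := Fin.le_iff_val_le_val.1 h
      omega
    · rw [Fin.coe_sub_iff_lt.2 h]
      omega
  refine ⟨univ.map f, ?_, by simp⟩
  simp only [coe_map, coe_univ, Set.image_univ]
  rintro _ ⟨i, rfl⟩ _ ⟨j, rfl⟩ hne hadj
  have hij : i ≠ j := fun h => hne (h ▸ rfl)
  have := hsub i j hij
  have := hsub j i hij.symm
  rcases val_sub_le_two_of_graphSquare_cycleGraph_adj hadj with h | h <;> omega

end SimpleGraph

open SimpleGraph in
theorem oddIndepNum_cycleGraph_add_three (n : ℕ) :
    oddIndepNum (cycleGraph (n + 3)) = (n + 3) / 3 := by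
  refine le_antisymm (oddIndepNum_le fun S hS => ?_) ?_
  · have hdeg v := (cycleGraph_isRegularOfDegree_two (n := n).degree_eq v).le
    have := (hS.isIndepSet_graphSquare hdeg).card_mul_le_of_graphSquare
      cycleGraph_isRegularOfDegree_two
    rw [Fintype.card_fin] at this
    omega
  · obtain ⟨S, hS, hcard⟩ := exists_isIndepSet_graphSquare_cycleGraph (n := n)
    exact hcard ▸ (isOddIndepSet_of_isIndepSet_graphSquare hS).card_le_oddIndepNum

lemma Int.ceil_natCast_sub_two_div_three (n : ℕ) : ⌈((n : ℚ) - 2) / 3⌉ = ((n / 3 : ℕ) : ℤ) := by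
  have h := Rat.ceil_intCast_div_natCast ((n : ℤ) - 2) 3
  push_cast at h
  rw [h]
  omega

/-- For every `n ≥ 3`, `αod(C_n) = ⌈(n−2)/3⌉`. -/
theorem oddIndepNum_cycleGraph (n : ℕ) (hn : 3 ≤ n) :
    (oddIndepNum (SimpleGraph.cycleGraph n) : ℤ) = ⌈((n : ℚ) - 2) / 3⌉ := by
  obtain ⟨m, rfl⟩ : ∃ m, n = m + 3 := ⟨n - 3, by omega⟩
  rw [oddIndepNum_cycleGraph_add_three, Int.ceil_natCast_sub_two_div_three]
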